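/- Fix m ≥ 1 and b ∈ {1,…,m}. For each even n ≥ m, let γ_n be a uniformly random even permutation of {1,…,n}, and let B_n be the number of cycles of γ_n that contain at least one element of {1,…,m}. Then as n → ∞, P(B_n = b) converges to c(m,b)/m!, where c(m,b) is the number of permutations of {1,…,m} having exactly b cycles (the unsigned Stirling number of the first kind). -/

import Mathlib

open Finset Filter

/-- The total number of cycles of a permutation (fixed points included). -/
noncomputable def numCycles {N : ℕ} (σ : Equiv.Perm (Fin N)) : ℕ :=
  Nat.card (Quotient (Equiv.Perm.SameCycle.setoid σ))

/-- The number of cycles of `σ` containing at least one element of the set `A`. -/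
noncomputable def numCyclesMeeting {N : ℕ} (σ : Equiv.Perm (Fin N)) (A : Set (Fin N)) : ℕ :=
  Nat.card {c : Quotient (Equiv.Perm.SameCycle.setoid σ) //
    ∃ k ∈ A, Quotient.mk (Equiv.Perm.SameCycle.setoid σ) k = c}

open scoped Nat Topology

/-!
Splicing the last point `N` out of its cycle is a bijection
`Perm (Fin (N + 1)) ≃ Option (Fin N) × Perm (Fin N)` (the option records the image of `N`) that
keeps the same-cycle relation on `Fin N` and multiplies the sign by `-1` unless `N` is fixed.
So for `N ≥ m` the number of permutations with `b` cycles meeting `{0, …, m - 1}` gets multiplied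
by `N + 1` at each step, hence equals `c(m, b) N! / m!`, while the sign-weighted count gets
multiplied by `1 - N`, hence is `O((N - 1)!)`. Half their sum counts the even such permutations,
and half of `N!` counts all even ones, so the probability is `c(m, b) / m! + O(1 / N)`.
-/

open Equiv Equiv.Perm

theorem Nat.card_range_eq_of_eq_iff {ι X Y : Type*} {f : ι → X} {g : ι → Y}
    (h : ∀ i j, f i = f j ↔ g i = g j) : Nat.card (Set.range f) = Nat.card (Set.range g) := by
  have hker : Setoid.ker f = Setoid.ker g := Setoid.ext h
  rw [← Nat.card_congr (Setoid.quotientKerEquivRange f),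
    ← Nat.card_congr (Setoid.quotientKerEquivRange g), hker]

theorem Equiv.sameCycle_permCongr {α β : Type*} (e : α ≃ β) (σ : Perm α) (a b : α) :
    (e.permCongr σ).SameCycle (e a) (e b) ↔ σ.SameCycle a b := by
  refine exists_congr fun i ↦ ?_
  rw [← e.permCongrHom_coe, ← map_zpow, e.permCongrHom_coe, permCongr_apply, symm_apply_apply,
    e.apply_eq_iff_eq]

namespace Equiv.Perm

variable {α β : Type*}

theorem SameCycle.map_of_forall_sameCycle_apply [Finite β] {σ : Perm α} {τ : Perm β}
    (f : β → α) (hf : ∀ w, σ.SameCycle (f w) (f (τ w))) {u v : β} (h : τ.SameCycle u v) :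
    σ.SameCycle (f u) (f v) := by
  obtain ⟨k, -, rfl⟩ := h.exists_pow_eq'
  clear h
  induction k with
  | zero => rfl
  | succ k ih => exact ih.trans (by rw [pow_succ', mul_apply]; exact hf _)

theorem sameCycle_decomposeOption_symm [DecidableEq α] [Finite α] (x : Option α)
    (σ : Perm α) (a b : α) :
    (decomposeOption.symm (x, σ)).SameCycle (some a) (some b) ↔ σ.SameCycle a b := by
  set τ := decomposeOption.symm (x, σ)
  have hτ_none : τ none = x := by simp [τ]
  have hτ_some (u : α) : τ (some u) = if some (σ u) = x then none else some (σ u) := by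
    simp [τ, swap_apply_def]
  -- For `x = some c`, `τ` is `σ` with `none` spliced into its cycle just before `c`, so
  -- collapsing `none` onto `c` turns every `τ`-step into a `σ`-step or a stay.
  constructor
  · refine fun h ↦ h.map_of_forall_sameCycle_apply (fun w ↦ w.getD (x.getD a)) fun w ↦ ?_
    rcases w with _ | u
    · rw [hτ_none]; cases x <;> rfl
    · have : (τ (some u)).getD (x.getD a) = σ u := by
        rw [hτ_some]; split_ifs with hx
        · simp [← hx]
        · rfl
      rw [Option.getD_some, this]
      exact sameCycle_apply_right.2 .rfl
  · refine fun h ↦ h.map_of_forall_sameCycle_apply some fun u ↦ ?_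
    by_cases hx : some (σ u) = x
    · have : some (σ u) = τ (τ (some u)) := by rw [hτ_some, if_pos hx, hτ_none, hx]
      rw [this]
      exact sameCycle_apply_right.2 (sameCycle_apply_right.2 .rfl)
    · have : some (σ u) = τ (some u) := by rw [hτ_some, if_neg hx]
      rw [this]
      exact sameCycle_apply_right.2 .rfl

theorem sign_decomposeOption_symm [DecidableEq α] [Fintype α] (x : Option α)
    (σ : Perm α) :
    sign (decomposeOption.symm (x, σ)) = (if x = none then 1 else -1) * sign σ := by
  rw [decomposeOption_symm_apply, Perm.sign_mul, optionCongr_sign]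
  rcases x with _ | a
  · simp
  · simp [sign_swap (Option.some_ne_none a).symm]

theorem two_mul_card_sign_eq_one_and [Fintype α] [DecidableEq α]
    (P : Perm α → Prop) [DecidablePred P] :
    2 * (#{σ | sign σ = 1 ∧ P σ} : ℤ) = #{σ | P σ} + ∑ σ with P σ, (sign σ : ℤ) := by
  simp only [card_filter, sum_filter, Nat.cast_sum, mul_sum, ← sum_add_distrib]
  refine sum_congr rfl fun σ _ ↦ ?_
  rcases Int.units_eq_one_or (sign σ) with h | h <;> by_cases hP : P σ <;> simp [h, hP]

theorem two_mul_card_sign_eq_one [Fintype α] [DecidableEq α] [Nontrivial α] :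
    2 * #{σ : Perm α | sign σ = 1} = (Fintype.card α)! := by
  rw [← Fintype.card_perm, ← Nat.card_eq_fintype_card, ← two_mul_nat_card_alternatingGroup,
    Nat.card_congr (subtypeEquivRight fun σ ↦ mem_alternatingGroup), Nat.card_eq_fintype_card,
    Fintype.card_subtype]

end Equiv.Perm

theorem numCyclesMeeting_range {N : ℕ} (σ : Perm (Fin N)) {ι : Type*} (f : ι → Fin N) :
    numCyclesMeeting σ (Set.range f) =
      Nat.card (Set.range fun i ↦ Quotient.mk (SameCycle.setoid σ) (f i)) := by
  change Nat.card ((Quotient.mk _) '' Set.range f) = _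
  rw [← Set.range_comp]
  rfl

theorem numCyclesMeeting_univ {N : ℕ} (σ : Perm (Fin N)) :
    numCyclesMeeting σ Set.univ = numCycles σ := by
  change Nat.card ((Quotient.mk _) '' Set.univ) = _
  rw [Set.image_univ_of_surjective Quotient.mk_surjective, Nat.card_univ, numCycles]

def decomposeFinLast (N : ℕ) : Perm (Fin (N + 1)) ≃ Option (Fin N) × Perm (Fin N) :=
  finSuccEquivLast.permCongr.trans decomposeOption

theorem sameCycle_decomposeFinLast_symm {N : ℕ} (x : Option (Fin N)) (p : Perm (Fin N))
    (a b : Fin N) :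
    ((decomposeFinLast N).symm (x, p)).SameCycle a.castSucc b.castSucc ↔ p.SameCycle a b := by
  rw [decomposeFinLast, symm_trans_apply, permCongr_symm, ← finSuccEquivLast_symm_some,
    ← finSuccEquivLast_symm_some, sameCycle_permCongr, sameCycle_decomposeOption_symm]

theorem sign_decomposeFinLast_symm {N : ℕ} (x : Option (Fin N)) (p : Perm (Fin N)) :
    sign ((decomposeFinLast N).symm (x, p)) = (if x = none then 1 else -1) * sign p := by
  rw [decomposeFinLast, symm_trans_apply, permCongr_symm, sign_permCongr,
    sign_decomposeOption_symm]

theorem numCyclesMeeting_decomposeFinLast_symm {m N : ℕ} (h : m ≤ N) (x : Option (Fin N))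
    (p : Perm (Fin N)) :
    numCyclesMeeting ((decomposeFinLast N).symm (x, p)) {k | (k : ℕ) < m} =
      numCyclesMeeting p {k | (k : ℕ) < m} := by
  rw [← Fin.range_castLE h, ← Fin.range_castLE (h.trans N.le_succ), numCyclesMeeting_range,
    numCyclesMeeting_range]
  refine Nat.card_range_eq_of_eq_iff fun i j ↦ ?_
  simp only [Quotient.eq]
  exact sameCycle_decomposeFinLast_symm x p (Fin.castLE h i) (Fin.castLE h j)

theorem Fintype.sum_perm_fin_succ {M : Type*} [AddCommMonoid M] (N : ℕ)
    (f : Perm (Fin (N + 1)) → M) :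
    ∑ σ, f σ = ∑ x, ∑ p, f ((decomposeFinLast N).symm (x, p)) := by
  rw [← Fintype.sum_prod_type']
  exact Fintype.sum_equiv (decomposeFinLast N) _ _ (by simp)

noncomputable def cycleMeetCount (m b N : ℕ) : ℕ :=
  #{σ : Perm (Fin N) | numCyclesMeeting σ {k | (k : ℕ) < m} = b}

noncomputable def signedCycleMeetCount (m b N : ℕ) : ℤ :=
  ∑ σ : Perm (Fin N) with numCyclesMeeting σ {k | (k : ℕ) < m} = b, (sign σ : ℤ)

section

variable {m b : ℕ}

theorem cycleMeetCount_succ {N : ℕ} (h : m ≤ N) :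
    cycleMeetCount m b (N + 1) = (N + 1) * cycleMeetCount m b N := by
  simp only [cycleMeetCount, card_filter]
  rw [Fintype.sum_perm_fin_succ]
  simp [numCyclesMeeting_decomposeFinLast_symm h]

theorem signedCycleMeetCount_succ {N : ℕ} (h : m ≤ N) :
    signedCycleMeetCount m b (N + 1) = (1 - N) * signedCycleMeetCount m b N := by
  simp only [signedCycleMeetCount, sum_filter]
  rw [Fintype.sum_perm_fin_succ]
  simp only [numCyclesMeeting_decomposeFinLast_symm h, sign_decomposeFinLast_symm]
  simp_rw [Units.val_mul, ← mul_ite_zero, ← mul_sum, ← sum_mul, Fintype.sum_option]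
  congr 1
  simp [sub_eq_add_neg]

theorem cycleMeetCount_mul_factorial {N : ℕ} (h : m ≤ N) :
    cycleMeetCount m b N * m ! = cycleMeetCount m b m * N ! := by
  induction N, h using Nat.le_induction with
  | base => rfl
  | succ N h ih => rw [cycleMeetCount_succ h, Nat.factorial_succ, mul_assoc, ih]; ring

theorem cycleMeetCount_self :
    cycleMeetCount m b m = #{π : Perm (Fin m) | numCycles π = b} := by
  have : {k : Fin m | (k : ℕ) < m} = Set.univ := Set.eq_univ_of_forall Fin.is_lt
  simp only [cycleMeetCount, this, numCyclesMeeting_univ]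

theorem succ_mul_abs_signedCycleMeetCount_div_factorial_le {N : ℕ} (h : m ≤ N) (hN : 1 ≤ N) :
    ((N + 1 : ℕ) : ℝ) * |(signedCycleMeetCount m b (N + 1) : ℝ) / (N + 1)!| ≤
      N * |(signedCycleMeetCount m b N : ℝ) / N !| := by
  have hN' : (1 : ℝ) ≤ N := by exact_mod_cast hN
  have hfac : (0 : ℝ) < N ! := by exact_mod_cast N.factorial_pos
  calc ((N + 1 : ℕ) : ℝ) * |(signedCycleMeetCount m b (N + 1) : ℝ) / (N + 1)!|
      = |1 - (N : ℝ)| * |(signedCycleMeetCount m b N : ℝ) / N !| := by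
        rw [signedCycleMeetCount_succ h, Nat.factorial_succ]
        push_cast
        rw [abs_div, abs_div, abs_mul, abs_mul, abs_of_pos hfac,
          abs_of_pos (by positivity : (0 : ℝ) < (N : ℝ) + 1)]
        field_simp
    _ ≤ N * |(signedCycleMeetCount m b N : ℝ) / N !| := by
        gcongr
        rw [abs_sub_comm, abs_of_nonneg (by linarith)]
        linarith

theorem tendsto_signedCycleMeetCount_div_factorial :
    Tendsto (fun N ↦ (signedCycleMeetCount m b N : ℝ) / N !) atTop (𝓝 0) := by
  set M := m + 1
  set C := (M : ℝ) * |(signedCycleMeetCount m b M : ℝ) / M !|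
  have hbound : ∀ N, M ≤ N → (N : ℝ) * |(signedCycleMeetCount m b N : ℝ) / N !| ≤ C := by
    intro N hN
    induction N, hN using Nat.le_induction with
    | base => exact le_rfl
    | succ N hN ih =>
      exact (succ_mul_abs_signedCycleMeetCount_div_factorial_le (by omega) (by omega)).trans ih
  refine squeeze_zero_norm' ?_ (tendsto_const_div_atTop_nhds_zero_nat C)
  filter_upwards [eventually_ge_atTop M] with N hN
  rw [Real.norm_eq_abs, le_div_iff₀ (by exact_mod_cast (by omega : 0 < N)), mul_comm]
  exact hbound N hN

theorem card_sign_eq_one_and_div_card_sign_eq_one {N : ℕ} (h : m ≤ N) (hN : 2 ≤ N) :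
    (#{σ : Perm (Fin N) | sign σ = 1 ∧ numCyclesMeeting σ {k | (k : ℕ) < m} = b} : ℝ) /
        #{σ : Perm (Fin N) | sign σ = 1} =
      cycleMeetCount m b m / m ! + signedCycleMeetCount m b N / N ! := by
  have hnum : 2 * (#{σ : Perm (Fin N) | sign σ = 1 ∧
      numCyclesMeeting σ {k | (k : ℕ) < m} = b} : ℝ) =
      cycleMeetCount m b N + signedCycleMeetCount m b N := by
    exact_mod_cast two_mul_card_sign_eq_one_and _
  have : Nontrivial (Fin N) := Fin.nontrivial_iff_two_le.2 hN
  have hden : 2 * (#{σ : Perm (Fin N) | sign σ = 1} : ℝ) = N ! := by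
    exact_mod_cast (Fintype.card_fin N) ▸ two_mul_card_sign_eq_one
  have hcount : (cycleMeetCount m b N : ℝ) * m ! = cycleMeetCount m b m * N ! := by
    exact_mod_cast cycleMeetCount_mul_factorial h
  rw [← mul_div_mul_left _ _ (two_ne_zero' ℝ), hnum, hden, add_div]
  congr 1
  rw [div_eq_div_iff (by positivity) (by positivity), hcount]

end

theorem stmt_14_general (m b : ℕ) :
    Tendsto
      (fun ν : ℕ =>
        ((univ.filter (fun σ : Equiv.Perm (Fin (2 * ν)) =>
            Equiv.Perm.sign σ = 1 ∧
              numCyclesMeeting σ {k : Fin (2 * ν) | (k : ℕ) < m} = b)).card : ℝ) /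
          ((univ.filter (fun σ : Equiv.Perm (Fin (2 * ν)) =>
            Equiv.Perm.sign σ = 1)).card : ℝ))
      atTop
      (nhds (((univ.filter (fun π : Equiv.Perm (Fin m) => numCycles π = b)).card : ℝ) /
        (Nat.factorial m : ℝ))) := by
  rw [← cycleMeetCount_self]
  have h2ν : Tendsto (fun ν : ℕ ↦ 2 * ν) atTop atTop :=
    tendsto_atTop_atTop.2 fun N ↦ ⟨N, fun ν hν ↦ by omega⟩
  have hlim := (tendsto_const_nhds (x := (cycleMeetCount m b m : ℝ) / m !)).add
    ((tendsto_signedCycleMeetCount_div_factorial (m := m) (b := b)).comp h2ν)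
  rw [add_zero] at hlim
  refine hlim.congr' ?_
  filter_upwards [eventually_ge_atTop (m + 1)] with ν hν
  exact (card_sign_eq_one_and_div_card_sign_eq_one (N := 2 * ν) (by omega) (by omega)).symm

/-- Fix `m ≥ 1` and `b ∈ {1,…,m}`. For even `n` (written `n = 2ν`),
let `γ_n` be a uniformly random even permutation of `{1,…,n}` and `B_n` the number of
cycles of `γ_n` meeting `{1,…,m}`. Then `P(B_n = b) → c(m,b)/m!` as `n → ∞`, where
`c(m,b)` is the number of permutations of `{1,…,m}` with exactly `b` cycles (the
unsigned Stirling number of the first kind). -/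
theorem stmt_14 (m b : ℕ) (hm : 1 ≤ m) (hb1 : 1 ≤ b) (hbm : b ≤ m) :
    Tendsto
      (fun ν : ℕ =>
        ((univ.filter (fun σ : Equiv.Perm (Fin (2 * ν)) =>
            Equiv.Perm.sign σ = 1 ∧
              numCyclesMeeting σ {k : Fin (2 * ν) | (k : ℕ) < m} = b)).card : ℝ) /
          ((univ.filter (fun σ : Equiv.Perm (Fin (2 * ν)) =>
            Equiv.Perm.sign σ = 1)).card : ℝ))
      atTop
      (nhds (((univ.filter (fun π : Equiv.Perm (Fin m) => numCycles π = b)).card : ℝ) /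
        (Nat.factorial m : ℝ))) :=
  stmt_14_general m b
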